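/- Let r₁, λ, ψ, u, c > 0. Let ξ_R := (−1 − √(1+8(r₁+λ)/ψ²))/2, v_R := r₁(u+c)/(r₁+λ) − r₁c/(ξ_R ψ²), κ_R := r₁²c²/(2(r₁+λ)ψ²), ξ_L := (−1 + √(1+8r₁/ψ²))/2, and v_L := u + c − r₁c/(ξ_L ψ²). Define, for x ∈ [v_R, v_L], a₊*(x) := 1 − [(√(2(r₁+λ))/ψ)·φ((x − r₁u/(r₁+λ))/√κ_R)] / [(√(2(r₁+λ))/ψ)·φ((v_R − r₁u/(r₁+λ))/√κ_R) + Φ((v_R − r₁u/(r₁+λ))/√κ_R) − Φ((x − r₁u/(r₁+λ))/√κ_R)]. If v_R < v_L, then the denominator in this definition is strictly positive for every x ∈ [v_R, v_L], a₊* is strictly increasing on [v_R, v_L], a₊*(v_R) = 0, and 0 < a₊*(v_L) < 1. -/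

import Mathlib

/-- The standard normal density φ(x) = exp(−x²/2)/√(2π). -/
noncomputable def normPdf (x : ℝ) : ℝ := Real.exp (-(x ^ 2) / 2) / Real.sqrt (2 * Real.pi)

/-- The standard normal CDF Φ(x) = ∫_{−∞}^{x} φ(t) dt. -/
noncomputable def normCdf (x : ℝ) : ℝ := ∫ t in Set.Iic x, normPdf t

/-!
Standardize `z = (x - r₁u/(r₁+λ)) / √κ_R`, so that `a₊* = 1 - A φ(z) / D(z)` with
`A = √(2(r₁+λ))/ψ` and `D(z) = A φ(a) + Φ(a) - Φ(z)`, where `a` is the standardized `v_R`.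
The quadratic equation for `ξ_R` gives `A a = 1 - ξ_R > 1`, so `a > 0`. The Mills-type bound
`z (Φ(w) - Φ(z)) ≤ φ(z) - φ(w)` for `z ≤ w` (integrate `z φ(t) ≤ t φ(t) = -φ'(t)`) then yields
`a D(z) > φ(z)` on `[a, ∞)`, which makes `D` positive and `φ / D` strictly decreasing there.
-/

open Set MeasureTheory

lemma normPdf_pos (x : ℝ) : 0 < normPdf x :=
  div_pos (Real.exp_pos _) (Real.sqrt_pos.2 (by positivity))

lemma normPdf_lt_normPdf {x y : ℝ} (hx : 0 ≤ x) (hxy : x < y) : normPdf y < normPdf x := by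
  unfold normPdf
  gcongr

lemma continuous_normPdf : Continuous normPdf := by
  unfold normPdf
  fun_prop

lemma integrable_normPdf : Integrable normPdf := by
  have h : normPdf = fun x => Real.exp (-(2⁻¹) * x ^ 2) * (Real.sqrt (2 * Real.pi))⁻¹ := by
    funext x
    rw [normPdf, div_eq_mul_inv]
    ring_nf
  rw [h]
  exact (integrable_exp_neg_mul_sq (by norm_num)).mul_const _

lemma normCdf_sub_normCdf (a b : ℝ) : normCdf b - normCdf a = ∫ t in a..b, normPdf t :=
  intervalIntegral.integral_Iic_sub_Iic integrable_normPdf.integrableOn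
    integrable_normPdf.integrableOn

lemma hasDerivAt_normPdf (t : ℝ) : HasDerivAt normPdf (-(t * normPdf t)) t := by
  have h : HasDerivAt (fun s : ℝ => -(s ^ 2) / 2) (-t) t :=
    ((hasDerivAt_pow 2 t).neg.div_const 2).congr_deriv (by ring)
  exact (h.exp.div_const (Real.sqrt (2 * Real.pi))).congr_deriv (by unfold normPdf; ring)

lemma integral_mul_normPdf (a b : ℝ) : ∫ t in a..b, t * normPdf t = normPdf a - normPdf b := by
  have h := intervalIntegral.integral_eq_sub_of_hasDerivAt (f := fun s => -normPdf s)
    (f' := fun t => t * normPdf t) (fun t _ => (hasDerivAt_normPdf t).neg.congr_deriv (neg_neg _))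
    ((continuous_id.mul continuous_normPdf).intervalIntegrable a b)
  rw [h]
  ring

lemma mul_normCdf_sub_normCdf_le {a b : ℝ} (hab : a ≤ b) :
    a * (normCdf b - normCdf a) ≤ normPdf a - normPdf b := by
  rw [normCdf_sub_normCdf, ← integral_mul_normPdf, ← intervalIntegral.integral_const_mul]
  refine intervalIntegral.integral_mono_on hab
    ((continuous_const.mul continuous_normPdf).intervalIntegrable a b)
    ((continuous_id.mul continuous_normPdf).intervalIntegrable a b) fun t ht => ?_
  exact mul_le_mul_of_nonneg_right ht.1 (normPdf_pos t).le

lemma monotone_normCdf : Monotone normCdf := fun a b hab => by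
  rw [← sub_nonneg, normCdf_sub_normCdf]
  exact intervalIntegral.integral_nonneg hab fun t _ => (normPdf_pos t).le

noncomputable def aplusDenom (A a z : ℝ) : ℝ := A * normPdf a + normCdf a - normCdf z

section aplusDenom

variable {A a : ℝ}

lemma normPdf_lt_mul_aplusDenom (hAa : 1 < A * a) {z : ℝ} (haz : a ≤ z) :
    normPdf z < a * aplusDenom A a z := by
  have hmills := mul_normCdf_sub_normCdf_le haz
  have hgap := mul_pos (sub_pos.2 hAa) (normPdf_pos a)
  unfold aplusDenom
  linarith

lemma aplusDenom_pos (ha : 0 < a) (hAa : 1 < A * a) {z : ℝ} (haz : a ≤ z) :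
    0 < aplusDenom A a z :=
  pos_of_mul_pos_right ((normPdf_pos z).trans (normPdf_lt_mul_aplusDenom hAa haz)) ha.le

lemma strictAntiOn_normPdf_div_aplusDenom (ha : 0 < a) (hAa : 1 < A * a) :
    StrictAntiOn (fun z => normPdf z / aplusDenom A a z) (Ici a) := by
  intro z (hz : a ≤ z) w (hw : a ≤ w) hzw
  have hdrop : normPdf w < normPdf z := normPdf_lt_normPdf (ha.le.trans hz) hzw
  have hmass : 0 ≤ normCdf w - normCdf z := sub_nonneg.2 (monotone_normCdf hzw.le)
  have hmills : a * (normCdf w - normCdf z) ≤ normPdf z - normPdf w :=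
    (mul_le_mul_of_nonneg_right hz hmass).trans (mul_normCdf_sub_normCdf_le hzw.le)
  have hDz := normPdf_lt_mul_aplusDenom hAa hz
  have key : normPdf z * (normCdf w - normCdf z) < (normPdf z - normPdf w) * aplusDenom A a z := by
    refine lt_of_mul_lt_mul_left ?_ ha.le
    calc a * (normPdf z * (normCdf w - normCdf z))
        ≤ normPdf z * (normPdf z - normPdf w) := by
          linarith [mul_le_mul_of_nonneg_left hmills (normPdf_pos z).le]
      _ < a * aplusDenom A a z * (normPdf z - normPdf w) :=
          mul_lt_mul_of_pos_right hDz (sub_pos.2 hdrop)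
      _ = a * ((normPdf z - normPdf w) * aplusDenom A a z) := by ring
  have hDw : aplusDenom A a w = aplusDenom A a z - (normCdf w - normCdf z) := by
    unfold aplusDenom; ring
  simp only
  rw [div_lt_div_iff₀ (aplusDenom_pos ha hAa hw) (aplusDenom_pos ha hAa hz), hDw]
  linarith

end aplusDenom

theorem aplus_properties_of_one_lt {A m s vR vL : ℝ} (hA : 0 < A) (hs : 0 < s)
    (hAa : 1 < A * ((vR - m) / s)) (hvRL : vR < vL) (aplus : ℝ → ℝ)
    (haplus : ∀ x, aplus x =
      1 - A * normPdf ((x - m) / s) / aplusDenom A ((vR - m) / s) ((x - m) / s)) :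
    (∀ x ∈ Icc vR vL, 0 < aplusDenom A ((vR - m) / s) ((x - m) / s)) ∧
    StrictMonoOn aplus (Icc vR vL) ∧ aplus vR = 0 ∧ 0 < aplus vL ∧ aplus vL < 1 := by
  set a := (vR - m) / s
  have ha : 0 < a := pos_of_mul_pos_right (one_pos.trans hAa) hA.le
  have hz : ∀ x ∈ Icc vR vL, (x - m) / s ∈ Ici a := fun x hx =>
    div_le_div_of_nonneg_right (sub_le_sub_right hx.1 m) hs.le
  have hD : ∀ x ∈ Icc vR vL, 0 < aplusDenom A a ((x - m) / s) := fun x hx =>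
    aplusDenom_pos ha hAa (hz x hx)
  have hmono : StrictMonoOn aplus (Icc vR vL) := by
    intro x hx y hy hxy
    rw [haplus, haplus, sub_lt_sub_iff_left, mul_div_assoc, mul_div_assoc]
    exact mul_lt_mul_of_pos_left (strictAntiOn_normPdf_div_aplusDenom ha hAa (hz x hx) (hz y hy)
      (div_lt_div_of_pos_right (sub_lt_sub_right hxy m) hs)) hA
  have hR : aplus vR = 0 := by
    rw [haplus, aplusDenom, add_sub_cancel_right, div_self (mul_pos hA (normPdf_pos a)).ne',
      sub_self]
  have hvR_mem := left_mem_Icc.2 hvRL.le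
  have hvL_mem := right_mem_Icc.2 hvRL.le
  have hL := div_pos (mul_pos hA (normPdf_pos ((vL - m) / s))) (hD vL hvL_mem)
  refine ⟨hD, hmono, hR, hR ▸ hmono hvR_mem hvL_mem hvRL, ?_⟩
  rw [haplus]
  linarith

lemma sq_add_self_of_eq_neg_root {k ξ : ℝ} (hk : 0 ≤ 1 + 4 * k)
    (hξ : ξ = (-1 - Real.sqrt (1 + 4 * k)) / 2) : ξ ^ 2 + ξ = k := by
  rw [hξ]
  linear_combination Real.sq_sqrt hk / 4

lemma sqrt_div_mul_standardized_vR {r₁ lam ψ u c ξ : ℝ} (hr : 0 < r₁) (hlam : 0 < lam)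
    (hψ : 0 < ψ) (hc : 0 < c) (hξ0 : ξ ≠ 0) (hξ : ξ ^ 2 + ξ = 2 * (r₁ + lam) / ψ ^ 2) :
    Real.sqrt (2 * (r₁ + lam)) / ψ *
      ((r₁ * (u + c) / (r₁ + lam) - r₁ * c / (ξ * ψ ^ 2) - r₁ * u / (r₁ + lam)) /
        Real.sqrt (r₁ ^ 2 * c ^ 2 / (2 * (r₁ + lam) * ψ ^ 2))) = 1 - ξ := by
  have hS2 := Real.sq_sqrt (by positivity : (0 : ℝ) ≤ 2 * (r₁ + lam))
  have hκ : Real.sqrt (r₁ ^ 2 * c ^ 2 / (2 * (r₁ + lam) * ψ ^ 2)) =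
      r₁ * c / (Real.sqrt (2 * (r₁ + lam)) * ψ) := by
    rw [Real.sqrt_eq_iff_mul_self_eq_of_pos (by positivity)]
    field_simp
    rw [hS2]
  rw [hκ]
  field_simp
  field_simp at hξ
  linear_combination c * (ψ ^ 2 * ξ - (r₁ + lam)) * hS2 + c * (r₁ + lam) * hξ

theorem aplus_properties_general (r₁ lam ψ u c ξR vR κR vL : ℝ)
    (hr : 0 < r₁) (hlam : 0 < lam) (hψ : 0 < ψ) (hc : 0 < c)
    (hξR : ξR = (-1 - Real.sqrt (1 + 8 * (r₁ + lam) / ψ ^ 2)) / 2)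
    (hvR : vR = r₁ * (u + c) / (r₁ + lam) - r₁ * c / (ξR * ψ ^ 2))
    (hκR : κR = r₁ ^ 2 * c ^ 2 / (2 * (r₁ + lam) * ψ ^ 2))
    (aplus : ℝ → ℝ)
    (haplus : ∀ x, aplus x = 1 -
      ((Real.sqrt (2 * (r₁ + lam)) / ψ) * normPdf ((x - r₁ * u / (r₁ + lam)) / Real.sqrt κR)) /
        ((Real.sqrt (2 * (r₁ + lam)) / ψ) * normPdf ((vR - r₁ * u / (r₁ + lam)) / Real.sqrt κR)
          + normCdf ((vR - r₁ * u / (r₁ + lam)) / Real.sqrt κR)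
          - normCdf ((x - r₁ * u / (r₁ + lam)) / Real.sqrt κR)))
    (hvRL : vR < vL) :
    (∀ x ∈ Set.Icc vR vL,
      0 < (Real.sqrt (2 * (r₁ + lam)) / ψ) * normPdf ((vR - r₁ * u / (r₁ + lam)) / Real.sqrt κR)
          + normCdf ((vR - r₁ * u / (r₁ + lam)) / Real.sqrt κR)
          - normCdf ((x - r₁ * u / (r₁ + lam)) / Real.sqrt κR)) ∧
    StrictMonoOn aplus (Set.Icc vR vL) ∧
    aplus vR = 0 ∧ 0 < aplus vL ∧ aplus vL < 1 := by
  have hξR_neg : ξR < 0 := by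
    rw [hξR]
    linarith [Real.sqrt_nonneg (1 + 8 * (r₁ + lam) / ψ ^ 2)]
  have hξR_sq : ξR ^ 2 + ξR = 2 * (r₁ + lam) / ψ ^ 2 :=
    sq_add_self_of_eq_neg_root (by positivity) (by rw [hξR]; ring_nf)
  have hAa := sqrt_div_mul_standardized_vR (u := u) hr hlam hψ hc hξR_neg.ne hξR_sq
  rw [← hvR, ← hκR] at hAa
  exact aplus_properties_of_one_lt (by positivity) (Real.sqrt_pos.2 (by rw [hκR]; positivity))
    (by linarith) hvRL aplus haplus

/-- Properties of the function a₊* on [v_R, v_L]: the denominator is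
strictly positive, a₊* is strictly increasing, a₊*(v_R) = 0, and 0 < a₊*(v_L) < 1. -/
theorem aplus_properties (r₁ lam ψ u c ξR vR κR ξL vL : ℝ)
    (hr : 0 < r₁) (hlam : 0 < lam) (hψ : 0 < ψ) (hu : 0 < u) (hc : 0 < c)
    (hξR : ξR = (-1 - Real.sqrt (1 + 8 * (r₁ + lam) / ψ ^ 2)) / 2)
    (hvR : vR = r₁ * (u + c) / (r₁ + lam) - r₁ * c / (ξR * ψ ^ 2))
    (hκR : κR = r₁ ^ 2 * c ^ 2 / (2 * (r₁ + lam) * ψ ^ 2))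
    (hξL : ξL = (-1 + Real.sqrt (1 + 8 * r₁ / ψ ^ 2)) / 2)
    (hvL : vL = u + c - r₁ * c / (ξL * ψ ^ 2))
    (aplus : ℝ → ℝ)
    (haplus : ∀ x, aplus x = 1 -
      ((Real.sqrt (2 * (r₁ + lam)) / ψ) * normPdf ((x - r₁ * u / (r₁ + lam)) / Real.sqrt κR)) /
        ((Real.sqrt (2 * (r₁ + lam)) / ψ) * normPdf ((vR - r₁ * u / (r₁ + lam)) / Real.sqrt κR)
          + normCdf ((vR - r₁ * u / (r₁ + lam)) / Real.sqrt κR)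
          - normCdf ((x - r₁ * u / (r₁ + lam)) / Real.sqrt κR)))
    (hvRL : vR < vL) :
    (∀ x ∈ Set.Icc vR vL,
      0 < (Real.sqrt (2 * (r₁ + lam)) / ψ) * normPdf ((vR - r₁ * u / (r₁ + lam)) / Real.sqrt κR)
          + normCdf ((vR - r₁ * u / (r₁ + lam)) / Real.sqrt κR)
          - normCdf ((x - r₁ * u / (r₁ + lam)) / Real.sqrt κR)) ∧
    StrictMonoOn aplus (Set.Icc vR vL) ∧
    aplus vR = 0 ∧ 0 < aplus vL ∧ aplus vL < 1 :=
  aplus_properties_general r₁ lam ψ u c ξR vR κR vL hr hlam hψ hc hξR hvR hκR aplus haplus hvRL
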